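/- Fix L ≥ 2 and d ≥ 1. There exists a constant C > 0 (depending only on d and L) such that for every R ≥ 1 and all x, x', z, z' ∈ ℝ^d with ‖(x,1)‖ ≤ R, ‖(x',1)‖ ≤ R, ‖(z,1)‖ ≤ R, ‖(z',1)‖ ≤ R, one has |K^NT(x,x') − K^NT(z,z')| ≤ C R² ‖(x,x') − (z,z')‖^{2^{−L}}, where ‖(x,x') − (z,z')‖ is the Euclidean norm on ℝ^{2d}. In particular, K^NT is Hölder continuous with exponent 2^{−L} on bounded sets. -/

import Mathlib

/-!
Writing `x̃ = (x, 1)`, the kernel is `‖x̃‖ ‖x̃'‖ S(ū) + 1`, where `ū` is the cosine of the angle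
between `x̃` and `x̃'` and `S` is a sum of products of the iterates `κ₁^{(r)}` and
`κ₀ ∘ κ₁^{(s)}`. Since `κ₁' = κ₀ ∈ [0, 1]`, `κ₁` is a `1`-Lipschitz self-map of `[-1, 1]`, while
`arccos`, hence `κ₀`, is `1/2`-Hölder; so `S` is `1/2`-Hölder on `[-1, 1]`. The map `x ↦ ‖x̃‖`
is `1`-Lipschitz and, because `‖x̃‖ ≥ 1`, `ū` is `2`-Lipschitz in each argument. This gives the
bound with exponent `1/2 ≥ 2^{-L}` at distances at most `1`; at larger distances the kernel
difference is at most `2 (L + 1) R²`.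
-/

open MeasureTheory Filter Topology

noncomputable section

/-- First arc-cosine kernel `κ₀`. -/
def kappa0 (u : ℝ) : ℝ := (Real.pi - Real.arccos u) / Real.pi

/-- Second arc-cosine kernel `κ₁`. -/
def kappa1 (u : ℝ) : ℝ := (Real.sqrt (1 - u ^ 2) + u * (Real.pi - Real.arccos u)) / Real.pi

/-- `ū = ⟨x̃, x̃′⟩ / (‖x̃‖‖x̃′‖)` where `x̃ = (x, 1) ∈ ℝ^{d+1}`. -/
def ntkBar {d : ℕ} (x y : EuclideanSpace ℝ (Fin d)) : ℝ :=
  (inner ℝ x y + 1) / (Real.sqrt (‖x‖ ^ 2 + 1) * Real.sqrt (‖y‖ ^ 2 + 1))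

/-- The neural tangent kernel of a fully-connected ReLU network with `L` hidden layers:
`K^NT(x, y) = ‖x̃‖‖ỹ‖ Σ_{r=0}^{L} κ₁^{(r)}(ū) Π_{s=r}^{L-1} κ₀(κ₁^{(s)}(ū)) + 1`. -/
def NTK (L : ℕ) {d : ℕ} (x y : EuclideanSpace ℝ (Fin d)) : ℝ :=
  Real.sqrt (‖x‖ ^ 2 + 1) * Real.sqrt (‖y‖ ^ 2 + 1) *
      ∑ r ∈ Finset.range (L + 1),
        kappa1^[r] (ntkBar x y) * ∏ s ∈ Finset.Ico r L, kappa0 (kappa1^[s] (ntkBar x y))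
    + 1

open Real Set

lemma norm_mul_sub_mul_le {R : Type*} [SeminormedRing R] (a b c d : R) :
    ‖a * b - c * d‖ ≤ ‖a - c‖ * ‖b‖ + ‖c‖ * ‖b - d‖ := by
  calc ‖a * b - c * d‖ = ‖(a - c) * b + c * (b - d)‖ := by noncomm_ring
    _ ≤ ‖a - c‖ * ‖b‖ + ‖c‖ * ‖b - d‖ :=
      (norm_add_le _ _).trans (add_le_add (norm_mul_le _ _) (norm_mul_le _ _))

lemma Finset.norm_prod_sub_prod_le {ι R : Type*} [NormedCommRing R] [NormOneClass R]
    (s : Finset ι) {f g : ι → R} (hf : ∀ i ∈ s, ‖f i‖ ≤ 1) (hg : ∀ i ∈ s, ‖g i‖ ≤ 1) :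
    ‖∏ i ∈ s, f i - ∏ i ∈ s, g i‖ ≤ ∑ i ∈ s, ‖f i - g i‖ := by
  induction s using Finset.cons_induction with
  | empty => simp
  | cons a s ha ih =>
    simp only [Finset.forall_mem_cons] at hf hg
    rw [Finset.prod_cons, Finset.prod_cons, Finset.sum_cons]
    have hprod : ‖∏ i ∈ s, f i‖ ≤ 1 :=
      (Finset.norm_prod_le _ _).trans (Finset.prod_le_one (fun _ _ ↦ norm_nonneg _) hf.2)
    calc _ ≤ ‖f a - g a‖ * ‖∏ i ∈ s, f i‖ + ‖g a‖ * ‖∏ i ∈ s, f i - ∏ i ∈ s, g i‖ :=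
          norm_mul_sub_mul_le _ _ _ _
      _ ≤ ‖f a - g a‖ * 1 + 1 * ∑ i ∈ s, ‖f i - g i‖ := by
          gcongr
          exacts [hg.1, ih hf.2 hg.2]
      _ = _ := by ring

section NormalizedVectors

variable {F : Type*} [NormedAddCommGroup F]

lemma norm_inv_norm_smul_sub_inv_norm_smul_le [NormedSpace ℝ F] {a b : F} (ha : a ≠ 0)
    (hb : b ≠ 0) : ‖‖a‖⁻¹ • a - ‖b‖⁻¹ • b‖ ≤ 2 * ‖a - b‖ / ‖a‖ := by
  have hcoef : |‖a‖⁻¹ - ‖b‖⁻¹| * ‖b‖ = |‖b‖ - ‖a‖| / ‖a‖ := by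
    calc |‖a‖⁻¹ - ‖b‖⁻¹| * ‖b‖ = |(‖a‖⁻¹ - ‖b‖⁻¹) * ‖b‖| := by rw [abs_mul, abs_norm]
      _ = |(‖b‖ - ‖a‖) / ‖a‖| := by congr 1; field_simp
      _ = |‖b‖ - ‖a‖| / ‖a‖ := by rw [abs_div, abs_norm]
  calc ‖‖a‖⁻¹ • a - ‖b‖⁻¹ • b‖ = ‖‖a‖⁻¹ • (a - b) + (‖a‖⁻¹ - ‖b‖⁻¹) • b‖ := by
        congr 1; module
    _ ≤ ‖a‖⁻¹ * ‖a - b‖ + |‖a‖⁻¹ - ‖b‖⁻¹| * ‖b‖ := by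
        refine (norm_add_le _ _).trans_eq ?_
        rw [norm_smul, norm_smul, norm_inv, norm_norm, Real.norm_eq_abs]
    _ ≤ ‖a - b‖ / ‖a‖ + ‖a - b‖ / ‖a‖ := by
        rw [hcoef, inv_mul_eq_div, abs_sub_comm]
        gcongr
        exact abs_norm_sub_norm_le a b
    _ = 2 * ‖a - b‖ / ‖a‖ := by ring

lemma real_inner_div_norm_mul_norm_eq_inner_smul [InnerProductSpace ℝ F] (a c : F) :
    inner ℝ a c / (‖a‖ * ‖c‖) = inner ℝ (‖a‖⁻¹ • a) (‖c‖⁻¹ • c) := by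
  rw [real_inner_smul_left, real_inner_smul_right, div_eq_mul_inv, mul_inv]
  ring

lemma abs_real_inner_div_norm_mul_norm_sub_le [InnerProductSpace ℝ F] {a b : F} (ha : a ≠ 0)
    (hb : b ≠ 0) (c : F) :
    |inner ℝ a c / (‖a‖ * ‖c‖) - inner ℝ b c / (‖b‖ * ‖c‖)| ≤ 2 * ‖a - b‖ / ‖a‖ := by
  have hc : ‖‖c‖⁻¹ • c‖ ≤ 1 := by
    rw [norm_smul, norm_inv, norm_norm]
    exact inv_mul_le_one_of_le₀ le_rfl (norm_nonneg _)
  rw [real_inner_div_norm_mul_norm_eq_inner_smul, real_inner_div_norm_mul_norm_eq_inner_smul,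
    ← inner_sub_left]
  calc _ ≤ ‖‖a‖⁻¹ • a - ‖b‖⁻¹ • b‖ * ‖‖c‖⁻¹ • c‖ := abs_real_inner_le_norm _ _
    _ ≤ 2 * ‖a - b‖ / ‖a‖ * 1 :=
        mul_le_mul (norm_inv_norm_smul_sub_inv_norm_smul_le ha hb) hc (norm_nonneg _)
          (by positivity)
    _ = 2 * ‖a - b‖ / ‖a‖ := mul_one _

end NormalizedVectors

lemma le_mul_rpow_of_le_mul_sqrt {t a b δ e : ℝ} (hδ : 0 ≤ δ) (he₀ : 0 ≤ e) (he : e ≤ 1 / 2)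
    (ha : 0 ≤ a) (hsmall : δ ≤ 1 → t ≤ a * √δ) (hlarge : t ≤ b) : t ≤ max a b * δ ^ e := by
  rcases le_or_gt δ 1 with hδ₁ | hδ₁
  · calc t ≤ a * √δ := hsmall hδ₁
      _ ≤ max a b * δ ^ e := by
        rw [sqrt_eq_rpow]
        exact mul_le_mul (le_max_left a b) (rpow_le_rpow_of_exponent_ge' hδ hδ₁ he₀ he)
          (by positivity) (ha.trans (le_max_left a b))
  · calc t ≤ max a b := hlarge.trans (le_max_right a b)
      _ ≤ max a b * δ ^ e :=
        le_mul_of_one_le_right (ha.trans (le_max_left a b)) (one_le_rpow hδ₁.le he₀)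

lemma one_sub_cos_arccos_sub_arccos_le {a b : ℝ} (ha : -1 ≤ a) (hb : b ≤ 1) (hab : a ≤ b) :
    1 - cos (arccos a - arccos b) ≤ b - a := by
  have ha' : a ≤ 1 := hab.trans hb
  have hb' : -1 ≤ b := ha.trans hab
  rw [cos_sub, cos_arccos ha ha', cos_arccos hb' hb, sin_arccos, sin_arccos,
    ← sqrt_mul (by nlinarith)]
  have hprod : 0 ≤ (1 + a) * (1 - b) := mul_nonneg (by linarith) (by linarith)
  -- after squaring, the gap is `2 (1 + a) (1 - b) (b - a) ≥ 0`
  have : (1 + a) * (1 - b) ≤ √((1 - a ^ 2) * (1 - b ^ 2)) :=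
    le_sqrt_of_sq_le (by nlinarith [mul_nonneg hprod (sub_nonneg.2 hab)])
  nlinarith

lemma abs_arccos_sub_arccos_le {a b : ℝ} (ha : a ∈ Icc (-1) 1) (hb : b ∈ Icc (-1) 1) :
    |arccos a - arccos b| ≤ π * √|a - b| := by
  wlog hab : a ≤ b generalizing a b
  · rw [abs_sub_comm, abs_sub_comm a]; exact this hb ha (le_of_not_ge hab)
  have hπ : |arccos a - arccos b| ≤ π := by
    rw [abs_le]
    constructor <;> linarith [arccos_nonneg a, arccos_nonneg b, arccos_le_pi a, arccos_le_pi b]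
  have hcos := cos_le_one_sub_mul_cos_sq hπ
  have key := one_sub_cos_arccos_sub_arccos_le ha.1 hb.2 hab
  rw [← sqrt_sq pi_pos.le, ← sqrt_mul (sq_nonneg _), abs_of_nonpos (sub_nonpos.2 hab), neg_sub]
  apply abs_le_sqrt
  have : 2 / π ^ 2 * (arccos a - arccos b) ^ 2 ≤ b - a := by linarith
  rw [div_mul_eq_mul_div, div_le_iff₀ (by positivity)] at this
  nlinarith [sq_nonneg (arccos a - arccos b), pi_pos]

lemma kappa0_mem_Icc (u : ℝ) : kappa0 u ∈ Icc 0 1 := by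
  unfold kappa0
  constructor
  · exact div_nonneg (sub_nonneg.2 (arccos_le_pi u)) pi_pos.le
  · exact div_le_one_of_le₀ (by linarith [arccos_nonneg u]) pi_pos.le

lemma abs_kappa0_le (u : ℝ) : |kappa0 u| ≤ 1 :=
  abs_le.2 ⟨by linarith [(kappa0_mem_Icc u).1], (kappa0_mem_Icc u).2⟩

lemma abs_kappa0_sub_kappa0_le {a b : ℝ} (ha : a ∈ Icc (-1) 1) (hb : b ∈ Icc (-1) 1) :
    |kappa0 a - kappa0 b| ≤ √|a - b| := by
  have : kappa0 a - kappa0 b = (arccos b - arccos a) / π := by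
    unfold kappa0; ring
  rw [this, abs_div, abs_of_pos pi_pos, div_le_iff₀ pi_pos, abs_sub_comm, mul_comm]
  exact abs_arccos_sub_arccos_le ha hb

lemma hasDerivAt_kappa1 {u : ℝ} (hu : u ∈ Ioo (-1) 1) : HasDerivAt kappa1 (kappa0 u) u := by
  have h₁ : u ≠ -1 := hu.1.ne'
  have h₂ : u ≠ 1 := hu.2.ne
  have hpos : 0 < 1 - u ^ 2 := by nlinarith [hu.1, hu.2]
  have hsqrt : HasDerivAt (fun t => √(1 - t ^ 2)) (-(2 * u) / (2 * √(1 - u ^ 2))) u := by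
    simpa using ((hasDerivAt_pow 2 u).const_sub 1).sqrt hpos.ne'
  have hderiv :=
    (hsqrt.add ((hasDerivAt_id' u).mul ((hasDerivAt_arccos h₁ h₂).const_sub π))).div_const π
  refine hderiv.congr_deriv ?_
  have hne : √(1 - u ^ 2) ≠ 0 := (sqrt_pos.2 hpos).ne'
  unfold kappa0
  field_simp
  ring

lemma continuous_kappa1 : Continuous kappa1 := by
  unfold kappa1; fun_prop

lemma monotoneOn_kappa1 : MonotoneOn kappa1 (Icc (-1) 1) :=
  monotoneOn_of_hasDerivWithinAt_nonneg (convex_Icc _ _) continuous_kappa1.continuousOn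
    (fun _ hu ↦ (hasDerivAt_kappa1 (by rwa [interior_Icc] at hu)).hasDerivWithinAt)
    (fun u _ ↦ (kappa0_mem_Icc u).1)

lemma monotoneOn_sub_kappa1 : MonotoneOn (fun u ↦ u - kappa1 u) (Icc (-1) 1) :=
  monotoneOn_of_hasDerivWithinAt_nonneg (convex_Icc _ _)
    (continuous_id.sub continuous_kappa1).continuousOn
    (fun _ hu ↦ ((hasDerivAt_id _).sub
      (hasDerivAt_kappa1 (by rwa [interior_Icc] at hu))).hasDerivWithinAt)
    (fun u _ ↦ sub_nonneg.2 (kappa0_mem_Icc u).2)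

lemma abs_kappa1_sub_kappa1_le {a b : ℝ} (ha : a ∈ Icc (-1) 1) (hb : b ∈ Icc (-1) 1) :
    |kappa1 a - kappa1 b| ≤ |a - b| := by
  wlog hab : a ≤ b generalizing a b
  · rw [abs_sub_comm, abs_sub_comm a]; exact this hb ha (le_of_not_ge hab)
  have h₁ := monotoneOn_kappa1 ha hb hab
  have h₂ := monotoneOn_sub_kappa1 ha hb hab
  rw [abs_of_nonpos (sub_nonpos.2 h₁), abs_of_nonpos (sub_nonpos.2 hab)]
  linarith

lemma mapsTo_kappa1 : MapsTo kappa1 (Icc (-1) 1) (Icc 0 1) := by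
  have h₀ : kappa1 (-1) = 0 := by simp [kappa1]
  have h₁ : kappa1 1 = 1 := by simp [kappa1, pi_ne_zero]
  intro u hu
  refine ⟨h₀ ▸ monotoneOn_kappa1 ⟨le_rfl, by norm_num⟩ hu hu.1,
    h₁ ▸ monotoneOn_kappa1 hu ⟨by norm_num, le_rfl⟩ hu.2⟩

lemma mapsTo_kappa1_iterate (r : ℕ) : MapsTo kappa1^[r] (Icc (-1) 1) (Icc (-1) 1) :=
  (mapsTo_kappa1.mono_right (Icc_subset_Icc_left (by norm_num))).iterate r

lemma abs_kappa1_iterate_sub_le (r : ℕ) {a b : ℝ} (ha : a ∈ Icc (-1) 1) (hb : b ∈ Icc (-1) 1) :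
    |kappa1^[r] a - kappa1^[r] b| ≤ |a - b| := by
  induction r with
  | zero => rfl
  | succ r ih =>
    rw [Function.iterate_succ_apply', Function.iterate_succ_apply']
    exact (abs_kappa1_sub_kappa1_le (mapsTo_kappa1_iterate r ha)
      (mapsTo_kappa1_iterate r hb)).trans ih

def ntkTerm (L r : ℕ) (u : ℝ) : ℝ :=
  kappa1^[r] u * ∏ s ∈ Finset.Ico r L, kappa0 (kappa1^[s] u)

def ntkProfile (L : ℕ) (u : ℝ) : ℝ :=
  ∑ r ∈ Finset.range (L + 1), ntkTerm L r u

lemma abs_kappa1_iterate_le (r : ℕ) {u : ℝ} (hu : u ∈ Icc (-1) 1) : |kappa1^[r] u| ≤ 1 :=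
  abs_le.2 (mapsTo_kappa1_iterate r hu)

lemma abs_prod_kappa0_le {ι : Type*} (t : Finset ι) (g : ι → ℝ) :
    |∏ s ∈ t, kappa0 (g s)| ≤ 1 := by
  rw [Finset.abs_prod]
  exact Finset.prod_le_one (fun _ _ ↦ abs_nonneg _) fun s _ ↦ abs_kappa0_le (g s)

lemma abs_prod_kappa0_sub_le (t : Finset ℕ) {u v : ℝ} (hu : u ∈ Icc (-1) 1)
    (hv : v ∈ Icc (-1) 1) :
    |∏ s ∈ t, kappa0 (kappa1^[s] u) - ∏ s ∈ t, kappa0 (kappa1^[s] v)| ≤ t.card * √|u - v| := by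
  calc _ ≤ ∑ s ∈ t, |kappa0 (kappa1^[s] u) - kappa0 (kappa1^[s] v)| :=
        t.norm_prod_sub_prod_le (R := ℝ) (fun s _ ↦ abs_kappa0_le _) (fun s _ ↦ abs_kappa0_le _)
    _ ≤ ∑ _s ∈ t, √|u - v| := Finset.sum_le_sum fun s _ ↦
        (abs_kappa0_sub_kappa0_le (mapsTo_kappa1_iterate s hu) (mapsTo_kappa1_iterate s hv)).trans
          (sqrt_le_sqrt (abs_kappa1_iterate_sub_le s hu hv))
    _ = t.card * √|u - v| := by rw [Finset.sum_const, nsmul_eq_mul]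

lemma abs_ntkTerm_le (L r : ℕ) {u : ℝ} (hu : u ∈ Icc (-1) 1) : |ntkTerm L r u| ≤ 1 := by
  rw [ntkTerm, abs_mul]
  exact mul_le_one₀ (abs_kappa1_iterate_le r hu) (abs_nonneg _) (abs_prod_kappa0_le _ _)

lemma abs_ntkTerm_sub_le (L r : ℕ) {u v : ℝ} (hu : u ∈ Icc (-1) 1) (hv : v ∈ Icc (-1) 1) :
    |ntkTerm L r u - ntkTerm L r v| ≤ |u - v| + L * √|u - v| := by
  have hcard : ((Finset.Ico r L).card : ℝ) ≤ L := by
    rw [Nat.card_Ico]; exact_mod_cast Nat.sub_le L r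
  calc _ ≤ |kappa1^[r] u - kappa1^[r] v| * |∏ s ∈ Finset.Ico r L, kappa0 (kappa1^[s] u)|
        + |kappa1^[r] v| * |∏ s ∈ Finset.Ico r L, kappa0 (kappa1^[s] u)
          - ∏ s ∈ Finset.Ico r L, kappa0 (kappa1^[s] v)| := norm_mul_sub_mul_le (R := ℝ) _ _ _ _
    _ ≤ |u - v| * 1 + 1 * ((Finset.Ico r L).card * √|u - v|) :=
        add_le_add
          (mul_le_mul (abs_kappa1_iterate_sub_le r hu hv) (abs_prod_kappa0_le _ _)
            (abs_nonneg _) (abs_nonneg _))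
          (mul_le_mul (abs_kappa1_iterate_le r hv) (abs_prod_kappa0_sub_le _ hu hv)
            (abs_nonneg _) zero_le_one)
    _ ≤ |u - v| + L * √|u - v| := by
        rw [mul_one, one_mul]; gcongr

lemma abs_ntkProfile_le (L : ℕ) {u : ℝ} (hu : u ∈ Icc (-1) 1) : |ntkProfile L u| ≤ L + 1 := by
  calc |ntkProfile L u| ≤ ∑ r ∈ Finset.range (L + 1), |ntkTerm L r u| :=
        Finset.abs_sum_le_sum_abs _ _
    _ ≤ ∑ _r ∈ Finset.range (L + 1), (1 : ℝ) :=
        Finset.sum_le_sum fun r _ ↦ abs_ntkTerm_le L r hu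
    _ = L + 1 := by simp

lemma abs_ntkProfile_sub_le (L : ℕ) {u v : ℝ} (hu : u ∈ Icc (-1) 1) (hv : v ∈ Icc (-1) 1) :
    |ntkProfile L u - ntkProfile L v| ≤ (L + 1) * (L + 2) * √|u - v| := by
  have hlin : |u - v| ≤ 2 * √|u - v| := by
    have : √|u - v| ≤ 2 := sqrt_le_iff.2 ⟨zero_le_two, by
      rw [abs_le]; constructor <;> linarith [hu.1, hu.2, hv.1, hv.2]⟩
    nlinarith [sq_sqrt (abs_nonneg (u - v)), sqrt_nonneg |u - v|]
  calc _ ≤ ∑ r ∈ Finset.range (L + 1), |ntkTerm L r u - ntkTerm L r v| := by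
        rw [ntkProfile, ntkProfile, ← Finset.sum_sub_distrib]
        exact Finset.abs_sum_le_sum_abs _ _
    _ ≤ ∑ _r ∈ Finset.range (L + 1), (L + 2) * √|u - v| :=
        Finset.sum_le_sum fun r _ ↦ (abs_ntkTerm_sub_le L r hu hv).trans (by linarith)
    _ = (L + 1) * (L + 2) * √|u - v| := by simp; ring

section Augmentation

variable {E : Type*} [NormedAddCommGroup E]

/-- The paper's `x̃ = (x, 1)`, with the Euclidean (`L²`) norm on `E × ℝ`. -/
def withOne (x : E) : WithLp 2 (E × ℝ) := WithLp.toLp 2 (x, 1)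

lemma norm_withOne (x : E) : ‖withOne x‖ = √(‖x‖ ^ 2 + 1) := by
  simp [withOne, WithLp.prod_norm_eq_of_L2]

lemma one_le_norm_withOne (x : E) : 1 ≤ ‖withOne x‖ := by
  rw [norm_withOne, one_le_sqrt]
  nlinarith [sq_nonneg ‖x‖]

lemma withOne_ne_zero (x : E) : withOne x ≠ 0 :=
  norm_pos_iff.1 (zero_lt_one.trans_le (one_le_norm_withOne x))

lemma norm_withOne_sub_withOne (x z : E) : ‖withOne x - withOne z‖ = ‖x - z‖ := by
  rw [WithLp.prod_norm_eq_of_L2]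
  simp [withOne]

lemma inner_withOne [InnerProductSpace ℝ E] (x y : E) :
    inner ℝ (withOne x) (withOne y) = inner ℝ x y + 1 := by
  simp [withOne]

lemma abs_norm_withOne_mul_sub_le {R : ℝ} {x x' z z' : E} (hx' : ‖withOne x'‖ ≤ R)
    (hz : ‖withOne z‖ ≤ R) :
    |‖withOne x‖ * ‖withOne x'‖ - ‖withOne z‖ * ‖withOne z'‖| ≤ R * (‖x - z‖ + ‖x' - z'‖) := by
  have hdiff (y w : E) : |‖withOne y‖ - ‖withOne w‖| ≤ ‖y - w‖ :=
    (abs_norm_sub_norm_le _ _).trans_eq (norm_withOne_sub_withOne y w)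
  calc _ ≤ |‖withOne x‖ - ‖withOne z‖| * |‖withOne x'‖|
        + |‖withOne z‖| * |‖withOne x'‖ - ‖withOne z'‖| :=
        norm_mul_sub_mul_le (R := ℝ) _ _ _ _
    _ ≤ ‖x - z‖ * R + R * ‖x' - z'‖ := by
        rw [abs_norm, abs_norm]
        exact add_le_add (mul_le_mul (hdiff x z) hx' (norm_nonneg _) (norm_nonneg _))
          (mul_le_mul hz (hdiff x' z') (abs_nonneg _) ((norm_nonneg _).trans hz))
    _ = R * (‖x - z‖ + ‖x' - z'‖) := by ring

end Augmentation

section NTK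

variable {d : ℕ}

lemma ntkBar_eq (x y : EuclideanSpace ℝ (Fin d)) :
    ntkBar x y = inner ℝ (withOne x) (withOne y) / (‖withOne x‖ * ‖withOne y‖) := by
  rw [inner_withOne, norm_withOne, norm_withOne, ntkBar]

lemma ntkBar_mem_Icc (x y : EuclideanSpace ℝ (Fin d)) : ntkBar x y ∈ Icc (-1) 1 :=
  abs_le.1 (ntkBar_eq x y ▸ abs_real_inner_div_norm_mul_norm_le_one _ _)

lemma ntkBar_comm (x y : EuclideanSpace ℝ (Fin d)) : ntkBar x y = ntkBar y x := by
  rw [ntkBar, ntkBar, real_inner_comm, mul_comm]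

lemma abs_ntkBar_sub_ntkBar_left_le (x z y : EuclideanSpace ℝ (Fin d)) :
    |ntkBar x y - ntkBar z y| ≤ 2 * ‖x - z‖ := by
  rw [ntkBar_eq, ntkBar_eq, ← norm_withOne_sub_withOne]
  refine (abs_real_inner_div_norm_mul_norm_sub_le (withOne_ne_zero x) (withOne_ne_zero z)
    _).trans ?_
  exact div_le_of_le_mul₀ (norm_nonneg _) (by positivity)
    (le_mul_of_one_le_right (by positivity) (one_le_norm_withOne x))

lemma abs_ntkBar_sub_ntkBar_le (x x' z z' : EuclideanSpace ℝ (Fin d)) :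
    |ntkBar x x' - ntkBar z z'| ≤ 2 * (‖x - z‖ + ‖x' - z'‖) := by
  calc _ ≤ |ntkBar x x' - ntkBar z x'| + |ntkBar x' z - ntkBar z' z| := by
        rw [ntkBar_comm x' z, ntkBar_comm z' z]; exact abs_sub_le _ _ _
    _ ≤ 2 * ‖x - z‖ + 2 * ‖x' - z'‖ :=
        add_le_add (abs_ntkBar_sub_ntkBar_left_le _ _ _) (abs_ntkBar_sub_ntkBar_left_le _ _ _)
    _ = 2 * (‖x - z‖ + ‖x' - z'‖) := by ring

lemma NTK_eq (L : ℕ) (x y : EuclideanSpace ℝ (Fin d)) :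
    NTK L x y = ‖withOne x‖ * ‖withOne y‖ * ntkProfile L (ntkBar x y) + 1 := by
  rw [norm_withOne, norm_withOne]; rfl

end NTK

section NTKBounds

variable {d : ℕ} {R : ℝ} {x x' z z' : EuclideanSpace ℝ (Fin d)}

lemma abs_NTK_sub_NTK_le (L : ℕ) (hx : ‖withOne x‖ ≤ R) (hx' : ‖withOne x'‖ ≤ R)
    (hz : ‖withOne z‖ ≤ R) (hz' : ‖withOne z'‖ ≤ R) :
    |NTK L x x' - NTK L z z'| ≤ 2 * (L + 1) * R ^ 2 := by
  have hbound (y w : EuclideanSpace ℝ (Fin d)) (hy : ‖withOne y‖ ≤ R) (hw : ‖withOne w‖ ≤ R) :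
      |‖withOne y‖ * ‖withOne w‖ * ntkProfile L (ntkBar y w)| ≤ R ^ 2 * (L + 1) := by
    rw [abs_mul, abs_mul, abs_norm, abs_norm, sq]
    exact mul_le_mul (mul_le_mul hy hw (norm_nonneg _) ((norm_nonneg _).trans hy))
      (abs_ntkProfile_le L (ntkBar_mem_Icc y w)) (abs_nonneg _) (mul_self_nonneg R)
  rw [NTK_eq, NTK_eq, add_sub_add_right_eq_sub]
  linarith [abs_sub _ _ |>.trans (add_le_add (hbound x x' hx hx') (hbound z z' hz hz'))]

lemma abs_NTK_sub_NTK_le_sqrt (L : ℕ) {δ : ℝ} (hR : 1 ≤ R) (hδ : δ ≤ 1)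
    (hx' : ‖withOne x'‖ ≤ R) (hz : ‖withOne z‖ ≤ R) (hz' : ‖withOne z'‖ ≤ R)
    (hxz : ‖x - z‖ ≤ δ) (hxz' : ‖x' - z'‖ ≤ δ) :
    |NTK L x x' - NTK L z z'| ≤ 2 * (L + 1) * (L + 3) * R ^ 2 * √δ := by
  have hR₀ : 0 ≤ R := zero_le_one.trans hR
  have hδ₀ : 0 ≤ δ := (norm_nonneg _).trans hxz
  have huv : √|ntkBar x x' - ntkBar z z'| ≤ 2 * √δ := by
    calc _ ≤ √(2 ^ 2 * δ) :=
          sqrt_le_sqrt <| (abs_ntkBar_sub_ntkBar_le x x' z z').trans (by linarith)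
      _ = 2 * √δ := by rw [sqrt_mul (by norm_num), sqrt_sq zero_le_two]
  have hδ_le : δ ≤ √δ := le_sqrt_self_iff.2 hδ
  rw [NTK_eq, NTK_eq, add_sub_add_right_eq_sub]
  calc _ ≤ |‖withOne x‖ * ‖withOne x'‖ - ‖withOne z‖ * ‖withOne z'‖| *
          |ntkProfile L (ntkBar x x')| + |‖withOne z‖ * ‖withOne z'‖| *
          |ntkProfile L (ntkBar x x') - ntkProfile L (ntkBar z z')| :=
        norm_mul_sub_mul_le (R := ℝ) _ _ _ _
    _ ≤ R * (δ + δ) * (L + 1) + R ^ 2 * ((L + 1) * (L + 2) * (2 * √δ)) := by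
        have hB : |‖withOne z‖ * ‖withOne z'‖| ≤ R ^ 2 := by
          rw [abs_mul, abs_norm, abs_norm, sq]
          exact mul_le_mul hz hz' (norm_nonneg _) hR₀
        refine add_le_add (mul_le_mul ?_ (abs_ntkProfile_le L (ntkBar_mem_Icc x x'))
          (abs_nonneg _) (by positivity)) (mul_le_mul hB ?_ (abs_nonneg _) (sq_nonneg R))
        · exact (abs_norm_withOne_mul_sub_le hx' hz).trans (by gcongr)
        · refine (abs_ntkProfile_sub_le L (ntkBar_mem_Icc x x') (ntkBar_mem_Icc z z')).trans ?_
          gcongr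
    _ = 2 * (L + 1) * (R * δ) + 2 * (L + 1) * (L + 2) * R ^ 2 * √δ := by ring
    _ ≤ 2 * (L + 1) * (R ^ 2 * √δ) + 2 * (L + 1) * (L + 2) * R ^ 2 * √δ := by
        gcongr 2 * (L + 1) * ?_ + _
        exact mul_le_mul (by nlinarith) hδ_le hδ₀ (sq_nonneg R)
    _ = 2 * (L + 1) * (L + 3) * R ^ 2 * √δ := by ring

end NTKBounds

theorem NTK_holder_general (d L : ℕ) (hL : 2 ≤ L) :
    ∃ C > (0:ℝ), ∀ R : ℝ, 1 ≤ R →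
      ∀ x x' z z' : EuclideanSpace ℝ (Fin d),
        Real.sqrt (‖x‖ ^ 2 + 1) ≤ R → Real.sqrt (‖x'‖ ^ 2 + 1) ≤ R →
        Real.sqrt (‖z‖ ^ 2 + 1) ≤ R → Real.sqrt (‖z'‖ ^ 2 + 1) ≤ R →
        |NTK L x x' - NTK L z z'|
          ≤ C * R ^ 2 *
            Real.sqrt (‖x - z‖ ^ 2 + ‖x' - z'‖ ^ 2) ^ (((1:ℝ) / 2) ^ L) := by
  refine ⟨max (2 * (L + 1) * (L + 3)) (2 * (L + 1)), by positivity, ?_⟩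
  intro R hR x x' z z' hx hx' hz hz'
  rw [← norm_withOne] at hx hx' hz hz'
  have hxz : ‖x - z‖ ≤ √(‖x - z‖ ^ 2 + ‖x' - z'‖ ^ 2) :=
    le_sqrt_of_sq_le (le_add_of_nonneg_right (sq_nonneg _))
  have hxz' : ‖x' - z'‖ ≤ √(‖x - z‖ ^ 2 + ‖x' - z'‖ ^ 2) :=
    le_sqrt_of_sq_le (le_add_of_nonneg_left (sq_nonneg _))
  have he : ((1 : ℝ) / 2) ^ L ≤ 1 / 2 := pow_le_of_le_one (by norm_num) (by norm_num) (by omega)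
  rw [max_mul_of_nonneg _ _ (sq_nonneg R)]
  exact le_mul_rpow_of_le_mul_sqrt (sqrt_nonneg _) (by positivity) he (by positivity)
    (fun hδ ↦ abs_NTK_sub_NTK_le_sqrt L hR hδ hx' hz hz' hxz hxz')
    (abs_NTK_sub_NTK_le L hx hx' hz hz')

/-- **Hölder continuity of the NTK.** For fixed `L ≥ 2` and `d ≥ 1` there is a
constant `C > 0` such that for all `R ≥ 1` and points with `‖(x,1)‖ ≤ R` etc.,
`|K^NT(x,x′) − K^NT(z,z′)| ≤ C R² ‖(x,x′) − (z,z′)‖^{2^{-L}}`. -/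
theorem NTK_holder (d L : ℕ) (hL : 2 ≤ L) (hd : 1 ≤ d) :
    ∃ C > (0:ℝ), ∀ R : ℝ, 1 ≤ R →
      ∀ x x' z z' : EuclideanSpace ℝ (Fin d),
        Real.sqrt (‖x‖ ^ 2 + 1) ≤ R → Real.sqrt (‖x'‖ ^ 2 + 1) ≤ R →
        Real.sqrt (‖z‖ ^ 2 + 1) ≤ R → Real.sqrt (‖z'‖ ^ 2 + 1) ≤ R →
        |NTK L x x' - NTK L z z'|
          ≤ C * R ^ 2 *
            Real.sqrt (‖x - z‖ ^ 2 + ‖x' - z'‖ ^ 2) ^ (((1:ℝ) / 2) ^ L) :=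
  NTK_holder_general d L hL

end
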